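/- arXiv:math/0205131 — 3 statements merged into one kernel-verified Lean document; each statement's English description precedes it below -/
import Mathlib

section
/- For any nonempty Young diagram λ, the scalar c_λ = (s − s⁻¹)(α·Σ_{c∈λ} s^{2·cn(c)} − α⁻¹·Σ_{c∈λ} s^{−2·cn(c)}) is a nonzero element of the field ℚ(α, s). -/
open MvPolynomial

noncomputable abbrev F : Type := FractionRing (MvPolynomial (Fin 2) ℚ)

noncomputable def α : F := algebraMap (MvPolynomial (Fin 2) ℚ) F (X 0)
noncomputable def s : F := algebraMap (MvPolynomial (Fin 2) ℚ) F (X 1)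

/-- The scalar `c_λ` associated to a Young diagram `λ`. -/
noncomputable def cLam (lam : YoungDiagram) : F :=
  (s - s⁻¹) * (α * ∑ c ∈ lam.cells, s ^ (2 * ((c.2 : ℤ) - (c.1 : ℤ)))
    - α⁻¹ * ∑ c ∈ lam.cells, s ^ (-(2 * ((c.2 : ℤ) - (c.1 : ℤ)))))

/-!
As `α` and `s` are algebraically independent over `ℚ`, `s - s⁻¹ ≠ 0` and `α` is transcendental
over `ℚ(s)`; hence `α A - α⁻¹ B = α⁻¹ (α² A - B)` with `A, B ∈ ℚ(s)` vanishes only if `A = 0`. Finally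
`A = ∑_{c ∈ λ} s ^ (2 cn(c))` is a nonzero Laurent polynomial in `s`: after multiplying by a power
of `s` it becomes a polynomial whose value at `1` is the number of cells.
-/

section
variable {R K : Type*} [Field R] [Field K] [Algebra R K]

theorem Transcendental.mul_algebraMap_sub_inv_mul_algebraMap_ne_zero {a : K}
    (ha : Transcendental R a) {u : R} (hu : u ≠ 0) (v : R) :
    a * algebraMap R K u - a⁻¹ * algebraMap R K v ≠ 0 := by
  have ha0 : a ≠ 0 := by rintro rfl; exact ha isAlgebraic_zero
  have hp : (Polynomial.C u * Polynomial.X ^ 2 - Polynomial.C v : Polynomial R) ≠ 0 := by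
    intro h
    have := congrArg (Polynomial.coeff · 2) h
    simp at this
    exact hu this
  intro h
  apply hp ((transcendental_iff.mp ha) _ _)
  have : a * (a * algebraMap R K u - a⁻¹ * algebraMap R K v) = 0 := by rw [h, mul_zero]
  rw [← this]
  simp only [map_sub, map_mul, Polynomial.aeval_C, map_pow, Polynomial.aeval_X]
  field_simp

theorem Transcendental.sum_zpow_ne_zero [CharZero R] {x : K} (hx : Transcendental R x)
    {ι : Type*} {S : Finset ι} (hS : S.Nonempty) (k : ι → ℤ) :
    ∑ i ∈ S, x ^ k i ≠ 0 := by
  have hx0 : x ≠ 0 := by rintro rfl; exact hx isAlgebraic_zero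
  set M : ℕ := ∑ i ∈ S, (k i).natAbs
  have hM : ∀ i ∈ S, 0 ≤ k i + M := fun i hi => by
    have : (k i).natAbs ≤ M := Finset.single_le_sum (f := fun i => (k i).natAbs) (by simp) hi
    omega
  set p : Polynomial R := ∑ i ∈ S, Polynomial.X ^ (k i + M).toNat
  have hp1 : p.eval 1 = S.card := by simp [p, Polynomial.eval_finsetSum]
  have hp : p ≠ 0 := fun h => by
    simp only [h, Polynomial.eval_zero] at hp1
    exact hS.card_pos.ne' (by exact_mod_cast hp1.symm)
  have hpx : Polynomial.aeval x p = x ^ M * ∑ i ∈ S, x ^ k i := by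
    simp only [p, map_sum, map_pow, Polynomial.aeval_X, Finset.mul_sum]
    refine Finset.sum_congr rfl fun i hi => ?_
    rw [← zpow_natCast, ← zpow_natCast, ← zpow_add₀ hx0, Int.toNat_of_nonneg (hM i hi), add_comm]
  intro h
  exact hp (transcendental_iff.mp hx p (by rw [hpx, h, mul_zero]))
end

theorem YoungDiagram.cells_nonempty_of_ne_bot {μ : YoungDiagram} (h : μ ≠ ⊥) :
    μ.cells.Nonempty :=
  Finset.nonempty_iff_ne_empty.mpr fun hc => h (YoungDiagram.ext (by rw [hc, cells_bot]))

theorem algebraicIndependent_α_s : AlgebraicIndependent ℚ ![α, s] := by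
  convert (MvPolynomial.algebraicIndependent_X (Fin 2) ℚ).map'
    (f := IsScalarTower.toAlgHom ℚ _ F) (IsFractionRing.injective _ _) using 1
  ext i; fin_cases i <;> rfl

theorem transcendental_s : Transcendental ℚ s :=
  algebraicIndependent_α_s.transcendental 1

theorem transcendental_α_adjoin_s : Transcendental (IntermediateField.adjoin ℚ {s}) α := by
  rw [IntermediateField.transcendental_adjoin_iff]
  have h1 : ![α, s] '' {1} = {s} := by simp
  have := algebraicIndependent_α_s.transcendental_adjoin (s := {1}) (i := 0) (by simp)
  rwa [h1] at this

/-- For any nonempty Young diagram `λ`, the scalar `c_λ` is nonzero in `ℚ(α,s)`. -/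
theorem cLam_ne_zero (lam : YoungDiagram) (h : lam ≠ ⊥) : cLam lam ≠ 0 := by
  have mem_adjoin : ∀ k : ℕ × ℕ → ℤ, ∑ c ∈ lam.cells, s ^ k c ∈ IntermediateField.adjoin ℚ {s} :=
    fun k => sum_mem fun c _ => zpow_mem (IntermediateField.mem_adjoin_simple_self ℚ s) _
  have hA : ∑ c ∈ lam.cells, s ^ (2 * ((c.2 : ℤ) - (c.1 : ℤ))) ≠ 0 :=
    transcendental_s.sum_zpow_ne_zero (YoungDiagram.cells_nonempty_of_ne_bot h) _
  refine mul_ne_zero ?_ ?_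
  · simpa using transcendental_s.mul_algebraMap_sub_inv_mul_algebraMap_ne_zero one_ne_zero 1
  · exact transcendental_α_adjoin_s.mul_algebraMap_sub_inv_mul_algebraMap_ne_zero
      (u := ⟨_, mem_adjoin _⟩) (Subtype.coe_ne_coe.mp hA) ⟨_, mem_adjoin _⟩
end

section
/- Let A be an associative unital algebra over a commutative ring k with invertible elements α, s, and s − s⁻¹. Suppose σ ∈ A is invertible and h ∈ A satisfies σ − σ⁻¹ = (s − s⁻¹)(1 − h) and σ·h = α⁻¹·h. Then σ satisfies the cubic relation (σ − s)·(σ + s⁻¹)·(σ − α⁻¹) = 0. -/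
/-!
All three factors are polynomials in `σ`, so they commute. Multiplying the skein relation by `σ`
gives `σ² - 1 = (s - s⁻¹)(σ - α⁻¹h)`, so the product of the first two factors,
`σ² - (s - s⁻¹)σ - 1`, is a scalar multiple of `h`; and `σ - α⁻¹` kills `h` from the left.
-/

section SkeinRelation

variable {k A : Type*} [CommRing k] [Ring A] [Algebra k A]

theorem sub_smul_one_mul_add_smul_one {s t : k} (hst : s * t = 1) (σ : A) :
    (σ - s • (1 : A)) * (σ + t • (1 : A)) = σ * σ - 1 - (s - t) • σ := by
  have hprod : (s • (1 : A)) * (t • (1 : A)) = 1 := by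
    rw [smul_mul_smul_comm, one_mul, hst, one_smul]
  rw [sub_mul, mul_add, mul_add, hprod, mul_smul_comm, smul_mul_assoc, mul_one, one_mul,
    sub_smul]
  abel

theorem mul_self_sub_one_eq_smul_of_skein {c b : k} {σ σi h : A} (hσ : σ * σi = 1)
    (hskein : σ - σi = c • ((1 : A) - h)) (hh : σ * h = b • h) :
    σ * σ - 1 = c • (σ - b • h) := by
  rw [← hσ, ← mul_sub, hskein, mul_smul_comm, mul_sub, mul_one, hh]

theorem sub_smul_one_mul_eq_zero {b : k} {σ h : A} (hh : σ * h = b • h) :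
    (σ - b • (1 : A)) * h = 0 := by
  rw [sub_mul, hh, smul_one_mul, sub_self]

theorem commute_sub_smul_one (σ : A) (a b : k) :
    Commute (σ - a • (1 : A)) (σ - b • (1 : A)) :=
  ((Commute.refl σ).sub_right ((Commute.one_right σ).smul_right b)).sub_left
    (((Commute.one_left σ).smul_left a).sub_right (((Commute.refl 1).smul_left a).smul_right b))

end SkeinRelation

theorem bmw_cubic_general {k A : Type*} [CommRing k] [Ring A] [Algebra k A]
    (ai ss si : k) (hs : ss * si = 1)
    (σ σi : A) (hσ : σ * σi = 1)
    (h : A) (hskein : σ - σi = (ss - si) • ((1 : A) - h))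
    (h1 : σ * h = ai • h) :
    (σ - ss • (1 : A)) * (σ + si • (1 : A)) * (σ - ai • (1 : A)) = 0 := by
  have hquadratic : (σ - ss • (1 : A)) * (σ + si • (1 : A)) = -((ss - si) • ai • h) := by
    rw [sub_smul_one_mul_add_smul_one hs, mul_self_sub_one_eq_smul_of_skein hσ hskein h1,
      smul_sub]
    abel
  have hcomm : Commute ((σ - ss • (1 : A)) * (σ + si • (1 : A))) (σ - ai • (1 : A)) := by
    rw [← sub_neg_eq_add, ← neg_smul]
    exact (commute_sub_smul_one σ ss ai).mul_left (commute_sub_smul_one σ (-si) ai)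
  rw [hcomm.eq, hquadratic, mul_neg, mul_smul_comm, mul_smul_comm,
    sub_smul_one_mul_eq_zero h1, smul_zero, smul_zero, neg_zero]

/-- The cubic relation `(σ − s)(σ + s⁻¹)(σ − α⁻¹) = 0` in the BMW algebra. -/
theorem bmw_cubic {k A : Type*} [CommRing k] [Ring A] [Algebra k A]
    (a ai ss si w : k) (ha : a * ai = 1) (hs : ss * si = 1) (hw : (ss - si) * w = 1)
    (σ σi : A) (hσ : σ * σi = 1) (hσ' : σi * σ = 1)
    (h : A) (hskein : σ - σi = (ss - si) • ((1 : A) - h))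
    (h1 : σ * h = ai • h) :
    (σ - ss • (1 : A)) * (σ + si • (1 : A)) * (σ - ai • (1 : A)) = 0 :=
  bmw_cubic_general ai ss si hs σ σi hσ h hskein h1
end

section
/- For every n ≥ 1, the number of pairs (Λ, Γ) of up-and-down tableaux of length n with Λ_n = Γ_n equals (2n − 1)!! = 1·3·5···(2n − 1). Equivalently, Σ_μ (u_n(μ))² = (2n−1)!!, where u_n(μ) is the number of up-and-down tableaux of length n with final diagram μ. -/
/-- The single-cell Young diagram. -/
noncomputable def box : YoungDiagram := YoungDiagram.ofRowLens [1] (by unfold List.SortedGE; intro i j _; fin_cases i; fin_cases j; exact le_rfl)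

/-- Two Young diagrams differ by exactly one cell (one is obtained from the
other by adding a single cell). -/
def Adj (μ ν : YoungDiagram) : Prop :=
  (μ ≤ ν ∧ ν.card = μ.card + 1) ∨ (ν ≤ μ ∧ μ.card = ν.card + 1)

/-- An up-and-down tableau of length `n`: a sequence of Young diagrams starting
at the single cell, each consecutive pair differing by exactly one cell. -/
def IsUpDown {n : ℕ} (f : Fin n → YoungDiagram) : Prop :=
  (∀ h0 : 0 < n, f ⟨0, h0⟩ = box) ∧
    ∀ i : ℕ, ∀ h : i + 1 < n, Adj (f ⟨i, Nat.lt_of_succ_lt h⟩) (f ⟨i + 1, h⟩)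

/-! Gluing `Λ` to the reverse of `Γ` identifies the pairs with the closed walks of length `2n - 2`
from the single cell in the Hasse diagram of Young's lattice, i.e. with the closed walks of length
`2n` from the empty diagram. Walks are counted by powers of `A = U + D`, where `U` adds and `D`
removes a cell. Every diagram has one more addable than removable row, and two distinct diagrams
`μ`, `λ` covered by a common `ν` are exactly the pairs covering `μ ⊓ λ`, with `ν = μ ⊔ λ`; so
Young's lattice is differential: `D U = U D + 1`. Hence `D A^(k+1) = A^(k+1) D + (k+1) A^k`, and
since `D` kills the empty diagram, the number `a_k` of closed walks of length `k` from it satisfies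
`a_(k+2) = (k+1) a_k`. -/

theorem mul_pow_succ_of_mul_eq_add_one {R : Type*} [Semiring R] {a b : R} (h : a * b = b * a + 1)
    (k : ℕ) : a * b ^ (k + 1) = b ^ (k + 1) * a + (k + 1) * b ^ k := by
  induction k with
  | zero => simpa using h
  | succ k ih =>
    calc a * b ^ (k + 2) = (a * b ^ (k + 1)) * b := by rw [pow_succ _ (k + 1), mul_assoc]
      _ = b ^ (k + 1) * (b * a + 1) + (k + 1) * b ^ (k + 1) := by
        rw [ih, add_mul, mul_assoc, mul_assoc, ← pow_succ, h]
      _ = b ^ (k + 2) * a + ((k + 1 : ℕ) + 1) * b ^ (k + 1) := by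
        rw [mul_add, mul_one, ← mul_assoc, ← pow_succ, add_assoc, Nat.cast_succ,
          add_one_mul ((k : R) + 1), add_comm (b ^ (k + 1))]

theorem IsLowerSet.insert {α : Type*} [PartialOrder α] {s : Set α} (hs : IsLowerSet s) {a : α}
    (ha : ∀ b < a, b ∈ s) : IsLowerSet (insert a s) := by
  rintro b c hcb (rfl | hb)
  · obtain rfl | hlt := eq_or_lt_of_le hcb
    exacts [Or.inl rfl, Or.inr (ha c hlt)]
  · exact Or.inr (hs hcb hb)

section Walks

variable {V : Type*} {r : V → V → Prop}

variable (r) in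
def IsWalk {n : ℕ} (f : Fin n → V) : Prop :=
  ∀ i : ℕ, ∀ h : i + 1 < n, r (f ⟨i, Nat.lt_of_succ_lt h⟩) (f ⟨i + 1, h⟩)

variable (r) in
/-- Indexed like `IsUpDown`, which is thus `IsWalkFrom Adj box` by definition. -/
def IsWalkFrom (a : V) {n : ℕ} (f : Fin n → V) : Prop :=
  (∀ h : 0 < n, f ⟨0, h⟩ = a) ∧ IsWalk r f

variable (r) in
def Walks (a b : V) (k : ℕ) : Type _ :=
  {f : Fin (k + 1) → V // IsWalkFrom r a f ∧ f (Fin.last k) = b}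

instance (a c : V) : Subsingleton (Walks r a c 0) :=
  ⟨fun v w => Subtype.ext (funext fun i => by
    rw [Fin.fin_one_eq_zero i]; exact (v.2.1.1 _).trans (w.2.1.1 _).symm)⟩

theorem card_walks_zero [DecidableEq V] (a c : V) :
    Nat.card (Walks r a c 0) = (Pi.single c 1 : V → ℕ) a := by
  by_cases h : a = c
  · subst h
    rw [Pi.single_eq_same, Nat.card_eq_one_iff_unique]
    exact ⟨inferInstance, ⟨⟨fun _ => a, ⟨fun _ => rfl, fun i h => by omega⟩, rfl⟩⟩⟩
  · rw [Pi.single_eq_of_ne h, Nat.card_eq_zero]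
    exact Or.inl ⟨fun w => h ((w.2.1.1 (by omega)).symm.trans w.2.2)⟩

variable (N : V → Finset V) (hN : ∀ a b, b ∈ N a ↔ r a b)
include hN

def walksSuccEquiv (a c : V) (k : ℕ) : Walks r a c (k + 1) ≃ Σ b : N a, Walks r b c k where
  toFun w :=
    ⟨⟨w.1 ⟨1, by omega⟩, (hN _ _).2 (w.2.1.1 (by omega) ▸ w.2.1.2 0 (by omega))⟩,
      ⟨Fin.tail w.1, ⟨fun _ => rfl, fun i _ => w.2.1.2 (i + 1) (by omega)⟩, w.2.2⟩⟩
  invFun p :=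
    ⟨Fin.cons a p.2.1, ⟨fun _ => rfl, fun
      | 0, _ => by
        have hr := (hN _ _).1 p.1.2
        rwa [← p.2.2.1.1 (by omega)] at hr
      | i + 1, _ => p.2.2.1.2 i (by omega)⟩, p.2.2.2⟩
  left_inv w := Subtype.ext <| funext fun i =>
    Fin.cases (w.2.1.1 (by omega)).symm (fun _ => rfl) i
  right_inv := by
    rintro ⟨⟨b, hb⟩, v, ⟨hv0, hv⟩, hvc⟩
    obtain rfl := hv0 (by omega)
    rfl

theorem finite_walks (k : ℕ) : ∀ a c : V, Finite (Walks r a c k) := by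
  induction k with
  | zero => exact fun a c => Finite.of_subsingleton
  | succ k ih => exact fun a c => Finite.of_equiv _ (walksSuccEquiv N hN a c k).symm

theorem card_walks_succ (a c : V) (k : ℕ) :
    Nat.card (Walks r a c (k + 1)) = ∑ b ∈ N a, Nat.card (Walks r b c k) := by
  have := finite_walks N hN k
  rw [Nat.card_congr (walksSuccEquiv N hN a c k), Nat.card_sigma,
    Finset.sum_coe_sort (N a) fun b => Nat.card (Walks r b c k)]

theorem card_walks_eq_pow_apply [DecidableEq V] (T : Module.End ℕ (V → ℕ))
    (hT : ∀ f a, T f a = ∑ b ∈ N a, f b) (c : V) (k : ℕ) (a : V) :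
    Nat.card (Walks r a c k) = (T ^ k) (Pi.single c 1) a := by
  induction k generalizing a with
  | zero => exact card_walks_zero a c
  | succ k ih => simp only [card_walks_succ N hN, ih, pow_succ', Module.End.mul_apply, hT]

omit hN

variable (j k : ℕ) (f : Fin (j + 1) → V) (g : Fin (k + 1) → V)

def glueRev : Fin (j + k + 1) → V :=
  fun x => if h : x.1 ≤ j then f ⟨x, by omega⟩ else g ⟨j + k - x, by omega⟩

variable {j k f g}

theorem glueRev_of_le {x : ℕ} (hx : x ≤ j) : glueRev j k f g ⟨x, by omega⟩ = f ⟨x, by omega⟩ :=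
  dif_pos hx

theorem glueRev_of_ge (hfg : f (Fin.last j) = g (Fin.last k)) {x : ℕ} (hx : j ≤ x)
    (hx' : x < j + k + 1) : glueRev j k f g ⟨x, hx'⟩ = g ⟨j + k - x, by omega⟩ := by
  by_cases h : x ≤ j
  · obtain rfl : x = j := by omega
    exact (glueRev_of_le h).trans (hfg.trans (congrArg g (Fin.ext (by simp))))
  · exact dif_neg h

theorem IsWalk.glueRev [Std.Symm r] (hf : IsWalk r f) (hg : IsWalk r g)
    (hfg : f (Fin.last j) = g (Fin.last k)) : IsWalk r (glueRev j k f g) := by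
  intro i hi
  by_cases h : i + 1 ≤ j
  · rw [glueRev_of_le (by omega), glueRev_of_le h]
    exact hf i (by omega)
  · rw [glueRev_of_ge hfg (by omega), glueRev_of_ge hfg (by omega)]
    convert symm (hg (j + k - (i + 1)) (by omega)) using 3
    omega

theorem IsWalk.rev_suffix [Std.Symm r] {w : Fin (j + k + 1) → V} (hw : IsWalk r w) :
    IsWalk r (fun i : Fin (k + 1) => w ⟨j + k - i, by omega⟩) := by
  intro i hi
  convert symm (hw (j + k - (i + 1)) (by omega)) using 3
  simp only
  omega

variable (r) in
def walkPairEquiv [Std.Symm r] (a : V) (j k : ℕ) :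
    {p : (Fin (j + 1) → V) × (Fin (k + 1) → V) //
        IsWalkFrom r a p.1 ∧ IsWalkFrom r a p.2 ∧ p.1 (Fin.last j) = p.2 (Fin.last k)} ≃
      Walks r a a (j + k) where
  toFun p := ⟨glueRev j k p.1.1 p.1.2, by
    obtain ⟨⟨f, g⟩, ⟨hf0, hf⟩, ⟨hg0, hg⟩, hfg⟩ := p
    refine ⟨⟨fun _ => (glueRev_of_le (Nat.zero_le j)).trans (hf0 _), hf.glueRev hg hfg⟩, ?_⟩
    exact (glueRev_of_ge hfg (by omega) _).trans
      ((congrArg g (Fin.ext (by simp))).trans (hg0 (by omega)))⟩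
  invFun w := ⟨(fun i => w.1 ⟨i, by omega⟩, fun i => w.1 ⟨j + k - i, by omega⟩), by
    obtain ⟨w, ⟨hw0, hw⟩, hwa⟩ := w
    refine ⟨⟨fun _ => hw0 _, fun i hi => hw i (by omega)⟩, ⟨fun _ => hwa, hw.rev_suffix⟩, ?_⟩
    exact congrArg w (Fin.ext (by simp))⟩
  left_inv p := by
    obtain ⟨⟨f, g⟩, -, -, hfg⟩ := p
    refine Subtype.ext (Prod.ext (funext fun i => glueRev_of_le (by omega)) (funext fun i => ?_))
    refine (glueRev_of_ge hfg (by omega) _).trans (congrArg g (Fin.ext ?_))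
    simp only
    omega
  right_inv w := by
    refine Subtype.ext (funext fun x => ?_)
    by_cases h : x.1 ≤ j
    · exact glueRev_of_le h
    · exact (dif_neg h).trans (congrArg w.1 (Fin.ext (by simp only; omega)))

namespace YoungDiagram

instance : DecidableEq YoungDiagram := fun _ _ => decidable_of_iff _ YoungDiagram.ext_iff.symm

def CovByCell (μ ν : YoungDiagram) : Prop :=
  μ ≤ ν ∧ ν.card = μ.card + 1

variable {μ ν ρ : YoungDiagram}

theorem covByCell_iff_exists_insert :
    CovByCell μ ν ↔ ∃ c ∉ μ.cells, insert c μ.cells = ν.cells := by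
  rw [Finset.exists_eq_insert_iff, cells_subset_iff, eq_comm]
  rfl

theorem eq_of_le_of_card_le (h : μ ≤ ν) (h' : ν.card ≤ μ.card) : μ = ν :=
  YoungDiagram.ext (Finset.eq_of_subset_of_card_le (cells_subset_iff.2 h) h')

theorem card_sup_add_card_inf (μ ν : YoungDiagram) :
    (μ ⊔ ν).card + (μ ⊓ ν).card = μ.card + ν.card := by
  simp only [YoungDiagram.card, cells_sup, cells_inf, Finset.card_union_add_card_inter]

theorem CovByCell.sup_eq_and_inf (hμ : CovByCell μ ν) (hρ : CovByCell ρ ν) (hne : ρ ≠ μ) :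
    μ ⊔ ρ = ν ∧ CovByCell (μ ⊓ ρ) μ ∧ CovByCell (μ ⊓ ρ) ρ := by
  obtain ⟨hμν, hμc⟩ := hμ
  obtain ⟨hρν, hρc⟩ := hρ
  have hsup : μ ⊔ ρ = ν := by
    refine eq_of_le_of_card_le (sup_le hμν hρν) ?_
    by_contra! hlt
    have hμsup : μ = μ ⊔ ρ := eq_of_le_of_card_le le_sup_left (by omega)
    exact hne (eq_of_le_of_card_le (hμsup ▸ le_sup_right) (by omega))
  have := card_sup_add_card_inf μ ρ
  rw [hsup] at this
  exact ⟨hsup, ⟨inf_le_left, by omega⟩, ⟨inf_le_right, by omega⟩⟩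

theorem CovByCell.inf_eq_and_sup (hμ : CovByCell ν μ) (hρ : CovByCell ν ρ) (hne : ρ ≠ μ) :
    μ ⊓ ρ = ν ∧ CovByCell μ (μ ⊔ ρ) ∧ CovByCell ρ (μ ⊔ ρ) := by
  obtain ⟨hνμ, hμc⟩ := hμ
  obtain ⟨hνρ, hρc⟩ := hρ
  have hinf : μ ⊓ ρ = ν := by
    refine (eq_of_le_of_card_le (le_inf hνμ hνρ) ?_).symm
    by_contra! hlt
    have hμinf : μ ⊓ ρ = μ := (eq_of_le_of_card_le inf_le_left (by omega))
    exact hne (eq_of_le_of_card_le (hμinf ▸ inf_le_right) (by omega)).symm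
  have := card_sup_add_card_inf μ ρ
  rw [hinf] at this
  exact ⟨hinf, ⟨le_sup_left, by omega⟩, ⟨le_sup_right, by omega⟩⟩

theorem rowLen_eq_zero_iff {i : ℕ} : μ.rowLen i = 0 ↔ μ.colLen 0 ≤ i := by
  rw [← not_iff_not, ← ne_eq, ← Nat.pos_iff_ne_zero, not_le, ← mem_iff_lt_rowLen,
    mem_iff_lt_colLen]

variable (μ) in
def addableRows : Finset ℕ :=
  (Finset.range (μ.colLen 0 + 1)).filter fun i => ∀ k < i, μ.rowLen i < μ.rowLen k

variable (μ) in
def removableRows : Finset ℕ :=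
  (Finset.range (μ.colLen 0)).filter fun i => μ.rowLen (i + 1) < μ.rowLen i

theorem mem_addableRows {i : ℕ} : i ∈ μ.addableRows ↔ ∀ k < i, μ.rowLen i < μ.rowLen k := by
  refine Finset.mem_filter.trans ⟨And.right, fun h => ⟨Finset.mem_range.2 ?_, h⟩⟩
  by_contra! hi
  have := h (μ.colLen 0) (by omega)
  rw [rowLen_eq_zero_iff.2 le_rfl] at this
  omega

theorem mem_removableRows {i : ℕ} : i ∈ μ.removableRows ↔ μ.rowLen (i + 1) < μ.rowLen i := by
  refine Finset.mem_filter.trans ⟨And.right, fun h => ⟨Finset.mem_range.2 ?_, h⟩⟩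
  by_contra! hi
  rw [rowLen_eq_zero_iff.2 hi] at h
  omega

theorem addableRows_eq : μ.addableRows = insert 0 (μ.removableRows.map (addRightEmbedding 1)) := by
  ext (_ | i)
  · simp [mem_addableRows]
  · simp only [mem_addableRows, Finset.mem_insert, Finset.mem_map, mem_removableRows,
      addRightEmbedding_apply, Nat.add_right_cancel_iff, exists_eq_right, Nat.add_one_ne_zero,
      false_or]
    exact ⟨fun h => h i (by omega), fun h k hk => h.trans_le (μ.rowLen_anti k i (by omega))⟩

theorem card_addableRows : μ.addableRows.card = μ.removableRows.card + 1 := by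
  rw [addableRows_eq, Finset.card_insert_of_notMem (by simp), Finset.card_map]

variable (μ) in
def addCell (i : ℕ) (hi : i ∈ μ.addableRows) : YoungDiagram where
  cells := insert (i, μ.rowLen i) μ.cells
  isLowerSet := by
    rw [Finset.coe_insert]
    refine μ.isLowerSet.insert fun ⟨k, j⟩ hlt => mem_iff_lt_rowLen.2 ?_
    rcases Prod.mk_lt_mk.1 hlt with ⟨hk, hj⟩ | ⟨hk, hj⟩
    · exact hj.trans_lt (mem_addableRows.1 hi k hk)
    · exact hj.trans_le (μ.rowLen_anti k i hk)

variable (μ) in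
def removeCell (i : ℕ) (hi : i ∈ μ.removableRows) : YoungDiagram where
  cells := μ.cells.erase (i, μ.rowLen i - 1)
  isLowerSet := by
    rw [Finset.coe_erase]
    refine μ.isLowerSet.erase fun ⟨k, j⟩ hkj hle => ?_
    have hj := mem_iff_lt_rowLen.1 hkj
    obtain ⟨hk, hj'⟩ := Prod.mk_le_mk.1 hle
    have hr := mem_removableRows.1 hi
    obtain rfl | hk := eq_or_lt_of_le hk
    · rw [show j = μ.rowLen i - 1 by omega]
    · have := μ.rowLen_anti (i + 1) k hk
      omega

theorem covByCell_addCell (i : ℕ) (hi : i ∈ μ.addableRows) : CovByCell μ (μ.addCell i hi) :=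
  covByCell_iff_exists_insert.2 ⟨_, fun h => by simpa using mem_iff_lt_rowLen.1 h, rfl⟩

theorem covByCell_removeCell (i : ℕ) (hi : i ∈ μ.removableRows) :
    CovByCell (μ.removeCell i hi) μ := by
  have hmem : (i, μ.rowLen i - 1) ∈ μ.cells :=
    mem_iff_lt_rowLen.2 (by have := mem_removableRows.1 hi; omega)
  exact covByCell_iff_exists_insert.2 ⟨_, Finset.notMem_erase _ _, Finset.insert_erase hmem⟩

theorem CovByCell.exists_addCell (h : CovByCell μ ν) : ∃ i hi, μ.addCell i hi = ν := by
  obtain ⟨⟨i, j⟩, hc, hν⟩ := covByCell_iff_exists_insert.1 h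
  have hlt : ∀ b < (i, j), b ∈ μ := fun b hb => by
    have : b ∈ ν.cells := ν.isLowerSet hb.le (by rw [← hν]; simp)
    rw [← hν, Finset.mem_insert] at this
    exact this.resolve_left hb.ne
  have hj : j = μ.rowLen i := by
    refine le_antisymm ?_ (not_lt.1 fun h => hc (mem_iff_lt_rowLen.2 h))
    by_contra! h
    exact lt_irrefl _ (mem_iff_lt_rowLen.1 (hlt _ (Prod.mk_lt_mk_iff_right.2 h)))
  subst hj
  exact ⟨i, mem_addableRows.2 fun k hk => mem_iff_lt_rowLen.1 (hlt _
    (Prod.mk_lt_mk.2 (Or.inl ⟨hk, le_rfl⟩))), YoungDiagram.ext hν⟩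

theorem CovByCell.exists_removeCell (h : CovByCell ν μ) : ∃ i hi, μ.removeCell i hi = ν := by
  obtain ⟨⟨i, j⟩, hc, hμ⟩ := covByCell_iff_exists_insert.1 h
  have hgt : ∀ b, (i, j) < b → b ∉ μ := fun b hb hbμ => by
    rw [← mem_cells, ← hμ, Finset.mem_insert] at hbμ
    exact hc (ν.isLowerSet hb.le (hbμ.resolve_left hb.ne'))
  have hj : j < μ.rowLen i := mem_iff_lt_rowLen.1 (by rw [← mem_cells, ← hμ]; simp)
  have hj' : μ.rowLen i ≤ j + 1 :=
    not_lt.1 fun h => hgt _ (Prod.mk_lt_mk_iff_right.2 (Nat.lt_succ_self j)) (mem_iff_lt_rowLen.2 h)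
  have hi : i ∈ μ.removableRows := mem_removableRows.2 <| (not_lt.1 fun h =>
    hgt _ (Prod.mk_lt_mk_iff_left.2 (Nat.lt_succ_self i)) (mem_iff_lt_rowLen.2 h)).trans_lt hj
  obtain rfl : j = μ.rowLen i - 1 := by omega
  exact ⟨i, hi, YoungDiagram.ext <|
    (congrArg (Finset.erase · (i, μ.rowLen i - 1)) hμ.symm).trans (Finset.erase_insert hc)⟩

variable (μ) in
def upCov : Finset YoungDiagram :=
  μ.addableRows.attach.image fun i => μ.addCell i.1 i.2

variable (μ) in
def downCov : Finset YoungDiagram :=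
  μ.removableRows.attach.image fun i => μ.removeCell i.1 i.2

theorem mem_upCov : ν ∈ μ.upCov ↔ CovByCell μ ν := by
  simp only [upCov, Finset.mem_image, Finset.mem_attach, true_and, Subtype.exists]
  exact ⟨fun ⟨i, hi, h⟩ => h ▸ covByCell_addCell i hi, CovByCell.exists_addCell⟩

theorem mem_downCov : ν ∈ μ.downCov ↔ CovByCell ν μ := by
  simp only [downCov, Finset.mem_image, Finset.mem_attach, true_and, Subtype.exists]
  exact ⟨fun ⟨i, hi, h⟩ => h ▸ covByCell_removeCell i hi, CovByCell.exists_removeCell⟩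

theorem card_upCov : μ.upCov.card = μ.downCov.card + 1 := by
  rw [upCov, downCov, Finset.card_image_of_injective, Finset.card_image_of_injective,
    Finset.card_attach, Finset.card_attach, card_addableRows]
  · rintro ⟨i, hi⟩ ⟨k, hk⟩ h
    have hmem : (i, μ.rowLen i - 1) ∈ μ.cells :=
      mem_iff_lt_rowLen.2 (by have := mem_removableRows.1 hi; omega)
    by_contra hne
    have := congrArg (fun ν => (i, μ.rowLen i - 1) ∈ ν.cells) h
    simp only [removeCell, Finset.mem_erase, ne_eq, not_true_eq_false, hmem, and_true,
      Prod.mk.injEq, not_and, eq_iff_iff, false_iff, Classical.not_imp, Decidable.not_not] at this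
    exact hne (Subtype.ext this.1)
  · rintro ⟨i, hi⟩ ⟨k, hk⟩ h
    have := congrArg (fun ν => (i, μ.rowLen i) ∈ ν.cells) h
    simp only [addCell, Finset.mem_insert, mem_cells, true_or, Prod.mk.injEq, eq_iff_iff,
      true_iff] at this
    obtain ⟨rfl, -⟩ | h := this
    · rfl
    · exact absurd (mem_iff_lt_rowLen.1 h) (lt_irrefl _)

def up : Module.End ℕ (YoungDiagram → ℕ) :=
  LinearMap.pi fun μ => ∑ ν ∈ μ.downCov, LinearMap.proj ν

def down : Module.End ℕ (YoungDiagram → ℕ) :=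
  LinearMap.pi fun μ => ∑ ν ∈ μ.upCov, LinearMap.proj ν

theorem up_apply (f : YoungDiagram → ℕ) (μ : YoungDiagram) : up f μ = ∑ ν ∈ μ.downCov, f ν := by
  simp [up]

theorem down_apply (f : YoungDiagram → ℕ) (μ : YoungDiagram) : down f μ = ∑ ν ∈ μ.upCov, f ν := by
  simp [down]

theorem sum_upCov_sum_erase_downCov (f : YoungDiagram → ℕ) (μ : YoungDiagram) :
    ∑ ν ∈ μ.upCov, ∑ ρ ∈ ν.downCov.erase μ, f ρ = ∑ ν ∈ μ.downCov, ∑ ρ ∈ ν.upCov.erase μ, f ρ := by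
  rw [Finset.sum_sigma', Finset.sum_sigma']
  refine Finset.sum_nbij' (fun p => ⟨μ ⊓ p.2, p.2⟩) (fun p => ⟨μ ⊔ p.2, p.2⟩) ?_ ?_ ?_ ?_
    (fun _ _ => rfl)
  all_goals
    rintro ⟨ν, ρ⟩ hp
    simp only [Finset.mem_sigma, Finset.mem_erase, mem_upCov, mem_downCov] at hp ⊢
  · obtain ⟨-, h₂, h₃⟩ := hp.1.sup_eq_and_inf hp.2.2 hp.2.1
    exact ⟨h₂, hp.2.1, h₃⟩
  · obtain ⟨-, h₂, h₃⟩ := hp.1.inf_eq_and_sup hp.2.2 hp.2.1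
    exact ⟨h₂, hp.2.1, h₃⟩
  · rw [(hp.1.sup_eq_and_inf hp.2.2 hp.2.1).1]
  · rw [(hp.1.inf_eq_and_sup hp.2.2 hp.2.1).1]

theorem down_mul_up : down * up = up * down + 1 := by
  ext f μ
  simp only [Module.End.mul_apply, LinearMap.add_apply, Module.End.one_apply, Pi.add_apply,
    up_apply, down_apply]
  have hsplit : ∀ (s : YoungDiagram → Finset YoungDiagram) (t : Finset YoungDiagram),
      (∀ ν ∈ t, μ ∈ s ν) →
      ∑ ν ∈ t, ∑ ρ ∈ s ν, f ρ = ∑ ν ∈ t, ∑ ρ ∈ (s ν).erase μ, f ρ + t.card * f μ := by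
    intro s t h
    rw [← smul_eq_mul, ← Finset.sum_const, ← Finset.sum_add_distrib]
    exact Finset.sum_congr rfl fun ν hν => (Finset.sum_erase_add _ _ (h ν hν)).symm
  rw [hsplit _ _ fun ν hν => mem_downCov.2 (mem_upCov.1 hν),
    hsplit _ _ fun ν hν => mem_upCov.2 (mem_downCov.1 hν), sum_upCov_sum_erase_downCov, card_upCov]
  ring

theorem box_cells : box.cells = {(0, 0)} := rfl

theorem eq_box_iff_card_eq_one : μ = box ↔ μ.card = 1 := by
  refine ⟨fun h => h ▸ rfl, fun h => YoungDiagram.ext ?_⟩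
  obtain ⟨c, hc⟩ := Finset.card_eq_one.1 h
  have h0 : (0, 0) ∈ μ := μ.up_left_mem (Nat.zero_le c.1) (Nat.zero_le c.2)
    (by rw [← mem_cells, hc]; exact Finset.mem_singleton_self c)
  rw [← mem_cells, hc, Finset.mem_singleton] at h0
  rw [hc, ← h0, box_cells]

theorem card_bot : (⊥ : YoungDiagram).card = 0 := rfl

theorem covByCell_bot_iff : CovByCell ⊥ μ ↔ μ = box := by
  rw [eq_box_iff_card_eq_one, CovByCell, card_bot]
  exact and_iff_right bot_le

theorem not_covByCell_bot : ¬CovByCell μ ⊥ := fun h => by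
  have := h.2
  rw [card_bot] at this
  omega

theorem upCov_bot : (⊥ : YoungDiagram).upCov = {box} := by
  ext μ
  rw [mem_upCov, Finset.mem_singleton, covByCell_bot_iff]

theorem downCov_bot : (⊥ : YoungDiagram).downCov = ∅ :=
  Finset.eq_empty_of_forall_notMem fun _ h => not_covByCell_bot (mem_downCov.1 h)

theorem up_apply_bot (f : YoungDiagram → ℕ) : up f ⊥ = 0 := by
  rw [up_apply, downCov_bot, Finset.sum_empty]

theorem down_apply_bot (f : YoungDiagram → ℕ) : down f ⊥ = f box := by
  rw [down_apply, upCov_bot, Finset.sum_singleton]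

theorem up_single_bot : up (Pi.single ⊥ 1) = Pi.single box 1 := by
  ext μ
  rw [up_apply, Finset.sum_pi_single', Pi.single_apply]
  exact if_congr (mem_downCov.trans covByCell_bot_iff) rfl rfl

theorem down_single_bot : down (Pi.single ⊥ 1) = 0 := by
  ext μ
  rw [down_apply, Finset.sum_pi_single', if_neg (mt mem_upCov.1 not_covByCell_bot)]
  rfl

instance : Std.Symm Adj := ⟨fun _ _ h => h.symm⟩

theorem mem_upCov_union_downCov {μ ν : YoungDiagram} : ν ∈ μ.upCov ∪ μ.downCov ↔ Adj μ ν := by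
  rw [Finset.mem_union, mem_upCov, mem_downCov]
  rfl

theorem up_add_down_apply (f : YoungDiagram → ℕ) (μ : YoungDiagram) :
    (up + down) f μ = ∑ ν ∈ μ.upCov ∪ μ.downCov, f ν := by
  rw [Finset.sum_union, LinearMap.add_apply, Pi.add_apply, up_apply, down_apply, add_comm]
  refine Finset.disjoint_left.2 fun ν h₁ h₂ => ?_
  have := (mem_upCov.1 h₁).2
  have := (mem_downCov.1 h₂).2
  omega

theorem card_walks_adj (a c : YoungDiagram) (k : ℕ) :
    Nat.card (Walks Adj a c k) = (((up + down) ^ k) (Pi.single c 1)) a :=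
  card_walks_eq_pow_apply _ (fun _ _ => mem_upCov_union_downCov) _ up_add_down_apply c k a

theorem down_mul_up_add_down : down * (up + down) = (up + down) * down + 1 := by
  rw [mul_add, add_mul, down_mul_up, add_right_comm]

theorem down_up_add_down_pow_succ_single_bot (k : ℕ) :
    down (((up + down) ^ (k + 1)) (Pi.single ⊥ 1)) =
      (k + 1) • ((up + down) ^ k) (Pi.single ⊥ 1) := by
  rw [← Module.End.mul_apply, mul_pow_succ_of_mul_eq_add_one down_mul_up_add_down,
    LinearMap.add_apply, Module.End.mul_apply, down_single_bot, map_zero, zero_add,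
    Module.End.mul_apply, ← Nat.cast_succ, Module.End.natCast_apply]

theorem up_add_down_pow_succ_apply_bot (f : YoungDiagram → ℕ) (k : ℕ) :
    (((up + down) ^ (k + 1)) f) ⊥ = (((up + down) ^ k) f) box := by
  rw [pow_succ', Module.End.mul_apply, LinearMap.add_apply, Pi.add_apply, up_apply_bot,
    down_apply_bot, zero_add]

theorem up_add_down_pow_two_mul_single_bot_apply_bot (m : ℕ) :
    (((up + down) ^ (2 * m)) (Pi.single ⊥ 1)) ⊥ = ∏ i ∈ Finset.range m, (2 * i + 1) := by
  induction m with
  | zero => simp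
  | succ m ih =>
    rw [Finset.prod_range_succ, ← ih, mul_add_one, up_add_down_pow_succ_apply_bot,
      ← down_apply_bot (((up + down) ^ (2 * m + 1)) (Pi.single ⊥ 1)),
      down_up_add_down_pow_succ_single_bot, Pi.smul_apply, smul_eq_mul, mul_comm]

theorem up_add_down_single_bot : (up + down) (Pi.single ⊥ 1) = Pi.single box 1 := by
  rw [LinearMap.add_apply, up_single_bot, down_single_bot, add_zero]

end YoungDiagram

/-- For `n ≥ 1`, the number of pairs `(Λ, Γ)` of up-and-down tableaux of length
`n` with `Λ_n = Γ_n` equals the double factorial `(2n − 1)!! = 1·3·5⋯(2n−1)`. -/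
theorem card_pairs_upDown (n : ℕ) (hn : 1 ≤ n) :
    Nat.card { p : (Fin n → YoungDiagram) × (Fin n → YoungDiagram) //
        IsUpDown p.1 ∧ IsUpDown p.2 ∧
          p.1 ⟨n - 1, by omega⟩ = p.2 ⟨n - 1, by omega⟩ } =
      ∏ i ∈ Finset.range n, (2 * i + 1) := by
  obtain ⟨m, rfl⟩ : ∃ m, n = m + 1 := ⟨n - 1, by omega⟩
  let A := YoungDiagram.up + YoungDiagram.down
  calc
    _ = Nat.card (Walks Adj box box (m + m)) := Nat.card_congr (walkPairEquiv Adj box m m)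
    _ = (A ^ (m + m + 1)) (Pi.single ⊥ 1) box := by
      rw [YoungDiagram.card_walks_adj, ← YoungDiagram.up_add_down_single_bot,
        ← Module.End.mul_apply, ← pow_succ]
    _ = (A ^ (2 * (m + 1))) (Pi.single ⊥ 1) ⊥ := by
      rw [show 2 * (m + 1) = m + m + 1 + 1 by ring, YoungDiagram.up_add_down_pow_succ_apply_bot]
    _ = ∏ i ∈ Finset.range (m + 1), (2 * i + 1) :=
      YoungDiagram.up_add_down_pow_two_mul_single_bot_apply_bot (m + 1)
end Walks
end
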